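/- arXiv:2007.12428 — 5 statements merged into one kernel-verified Lean document; each statement's English description precedes it below -/
import Mathlib

section
/- Let t0 ≥ 0 and let γ : [t0,∞) → (0,∞) be nonincreasing and twice continuously differentiable, satisfying γ''(t) ≥ 2β²γ(t)³ for all t ≥ t0, for some β > 0. Then γ'(t) ≤ -βγ(t)² for all t ≥ t0. -/
/-!
Since `γ' ≤ 0` (as `γ` is nonincreasing), multiplying `γ'' ≥ 2β²γ³` by `2γ'` shows that the
energy `γ'² - β²γ⁴` is nonincreasing. If `γ'(t₁) > -βγ(t₁)²`, the energy is some `-c < 0` at `t₁`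
and stays `≤ -c` afterwards, so `β²γ⁴ ≥ c` and `γ(t₁)γ'' ≥ 2β²γ⁴ ≥ 2c` on `[t₁, ∞)`. Then `γ'`
grows at least linearly, hence becomes positive, which is impossible.
-/

open Set Filter

section Ici

variable {a : ℝ} {f f' : ℝ → ℝ}

lemma accPt_principal_Ici {x : ℝ} (hx : x ∈ Ici a) : AccPt x (𝓟 (Ici a)) :=
  isPreconnected_Ici.preperfect_of_nontrivial ⟨a, self_mem_Ici, a + 1, by simp, by simp⟩ x hx

lemma monotoneOn_Ici_of_hasDerivWithinAt_nonneg
    (hf : ∀ x ∈ Ici a, HasDerivWithinAt f (f' x) (Ici a) x) (hf' : ∀ x ∈ Ioi a, 0 ≤ f' x) :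
    MonotoneOn f (Ici a) :=
  monotoneOn_of_hasDerivWithinAt_nonneg (convex_Ici a)
    (fun x hx ↦ (hf x hx).continuousWithinAt)
    (fun x hx ↦ by
      rw [interior_Ici] at hx ⊢
      exact (hf x (mem_Ici_of_Ioi hx)).mono Ioi_subset_Ici_self)
    (by simpa only [interior_Ici] using hf')

lemma antitoneOn_Ici_of_hasDerivWithinAt_nonpos
    (hf : ∀ x ∈ Ici a, HasDerivWithinAt f (f' x) (Ici a) x) (hf' : ∀ x ∈ Ioi a, f' x ≤ 0) :
    AntitoneOn f (Ici a) := by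
  have := monotoneOn_Ici_of_hasDerivWithinAt_nonneg (fun x hx ↦ (hf x hx).neg)
    fun x hx ↦ neg_nonneg.mpr (hf' x hx)
  exact fun x hx y hy hxy ↦ neg_le_neg_iff.mp (this hx hy hxy)

lemma tendsto_atTop_of_hasDerivWithinAt_Ici_of_le {δ : ℝ} (hδ : 0 < δ)
    (hf : ∀ x ∈ Ici a, HasDerivWithinAt f (f' x) (Ici a) x) (hf' : ∀ x ∈ Ioi a, δ ≤ f' x) :
    Tendsto f atTop atTop := by
  have hmono : MonotoneOn (fun x ↦ f x - δ * x) (Ici a) :=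
    monotoneOn_Ici_of_hasDerivWithinAt_nonneg
      (fun x hx ↦ (hf x hx).sub ((hasDerivWithinAt_id x _).const_mul δ))
      fun x hx ↦ by simpa using hf' x hx
  refine tendsto_atTop_mono' _ ?_
    (tendsto_atTop_add_const_left _ (f a - δ * a) (tendsto_id.const_mul_atTop hδ))
  filter_upwards [eventually_ge_atTop a] with x hx
  have := hmono self_mem_Ici hx hx
  simp only [id] at this ⊢
  linarith

end Ici

def energy (β : ℝ) (γ γ' : ℝ → ℝ) (t : ℝ) : ℝ := γ' t ^ 2 - β ^ 2 * γ t ^ 4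

section Energy

variable {a β : ℝ} {γ γ' γ'' : ℝ → ℝ}

lemma antitoneOn_energy
    (hd1 : ∀ t ∈ Ici a, HasDerivWithinAt γ (γ' t) (Ici a) t)
    (hd2 : ∀ t ∈ Ici a, HasDerivWithinAt γ' (γ'' t) (Ici a) t)
    (hγ' : ∀ t ∈ Ici a, γ' t ≤ 0) (hineq : ∀ t ∈ Ici a, 2 * β ^ 2 * γ t ^ 3 ≤ γ'' t) :
    AntitoneOn (energy β γ γ') (Ici a) := by
  refine antitoneOn_Ici_of_hasDerivWithinAt_nonpos
    (fun t ht ↦ ((hd2 t ht).pow 2).sub (((hd1 t ht).pow 4).const_mul (β ^ 2))) fun t ht ↦ ?_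
  have ht : t ∈ Ici a := mem_Ici_of_Ioi ht
  have key : 2 * γ' t * (γ'' t - 2 * β ^ 2 * γ t ^ 3) ≤ 0 :=
    mul_nonpos_of_nonpos_of_nonneg (by linarith [hγ' t ht]) (by linarith [hineq t ht])
  linear_combination key

lemma two_mul_neg_energy_le_mul (hpos : ∀ t ∈ Ici a, 0 < γ t) (hanti : AntitoneOn γ (Ici a))
    (hE : AntitoneOn (energy β γ γ') (Ici a)) (hineq : ∀ t ∈ Ici a, 2 * β ^ 2 * γ t ^ 3 ≤ γ'' t)
    {s t : ℝ} (hs : s ∈ Ici a) (hst : s ≤ t) :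
    2 * -energy β γ γ' s ≤ γ s * γ'' t := by
  have ht : t ∈ Ici a := le_trans hs hst
  have hEt := hE hs ht hst
  have hγt := hanti hs ht hst
  have hβγ : 0 ≤ β ^ 2 * γ t ^ 3 := by have := hpos t ht; positivity
  unfold energy at hEt ⊢
  nlinarith [mul_le_mul_of_nonneg_left (hineq t ht) (hpos s hs).le,
    mul_nonneg (sub_nonneg.mpr hγt) hβγ, sq_nonneg (γ' t)]

end Energy

theorem stmt_0_general (t0 β : ℝ)
    (γ γ' γ'' : ℝ → ℝ)
    (hpos : ∀ t ∈ Ici t0, 0 < γ t)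
    (hanti : AntitoneOn γ (Ici t0))
    (hd1 : ∀ t ∈ Ici t0, HasDerivWithinAt γ (γ' t) (Ici t0) t)
    (hd2 : ∀ t ∈ Ici t0, HasDerivWithinAt γ' (γ'' t) (Ici t0) t)
    (hineq : ∀ t ∈ Ici t0, 2 * β ^ 2 * γ t ^ 3 ≤ γ'' t) :
    ∀ t ∈ Ici t0, γ' t ≤ -β * γ t ^ 2 := by
  have hγ' : ∀ t ∈ Ici t0, γ' t ≤ 0 := fun t ht ↦
    (hd1 t ht).nonpos_of_antitoneOn (accPt_principal_Ici ht) hanti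
  have hE := antitoneOn_energy hd1 hd2 hγ' hineq
  intro t1 ht1
  by_contra! hlt
  have hgap : 0 < -energy β γ γ' t1 := by
    unfold energy
    nlinarith [hγ' t1 ht1, mul_pos (by linarith : 0 < γ' t1 + β * γ t1 ^ 2)
      (by linarith [hγ' t1 ht1] : 0 < β * γ t1 ^ 2 - γ' t1)]
  have hsub : Ici t1 ⊆ Ici t0 := Ici_subset_Ici.mpr ht1
  have hγ'' : ∀ t ∈ Ioi t1, 2 * -energy β γ γ' t1 / γ t1 ≤ γ'' t := fun t ht ↦
    (div_le_iff₀' (hpos t1 ht1)).mpr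
      (two_mul_neg_energy_le_mul hpos hanti hE hineq ht1 (le_of_lt ht))
  have htend : Tendsto γ' atTop atTop :=
    tendsto_atTop_of_hasDerivWithinAt_Ici_of_le (by have := hpos t1 ht1; positivity)
      (fun t ht ↦ (hd2 t (hsub ht)).mono hsub) hγ''
  obtain ⟨T, hT, hT0⟩ := ((htend.eventually_gt_atTop 0).and (eventually_ge_atTop t0)).exists
  linarith [hγ' T hT0]

theorem stmt_0 (t0 β : ℝ) (ht0 : 0 ≤ t0) (hβ : 0 < β)
    (γ γ' γ'' : ℝ → ℝ)
    (hpos : ∀ t ∈ Ici t0, 0 < γ t)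
    (hanti : AntitoneOn γ (Ici t0))
    (hd1 : ∀ t ∈ Ici t0, HasDerivWithinAt γ (γ' t) (Ici t0) t)
    (hd2 : ∀ t ∈ Ici t0, HasDerivWithinAt γ' (γ'' t) (Ici t0) t)
    (hc1 : ContinuousOn γ' (Ici t0))
    (hc2 : ContinuousOn γ'' (Ici t0))
    (hineq : ∀ t ∈ Ici t0, 2 * β ^ 2 * γ t ^ 3 ≤ γ'' t) :
    ∀ t ∈ Ici t0, γ' t ≤ -β * γ t ^ 2 :=
  stmt_0_general t0 β γ γ' γ'' hpos hanti hd1 hd2 hineq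
end

section
/- Let ω : [t0,T] → [0,∞) be integrable, C ≥ 0, and μ : [t0,T] → ℝ continuous. If (1/2)μ(t)² ≤ (1/2)C² + ∫_{t0}^t ω(s)μ(s) ds for all t ∈ [t0,T], then |μ(t)| ≤ C + ∫_{t0}^t ω(s) ds for all t ∈ [t0,T]. -/
open Set MeasureTheory

/-!
For ε > 0 compare |μ| with g = C + ε + W, where W(t) = ∫_{t0}^t ω. At a first point c where
|μ| would reach g we have |μ| ≤ g on [t0, c), so, since ω ≥ 0 and ∫_{t0}^c ω W = W(c)²/2,
  μ(c)² ≤ C² + 2 ∫_{t0}^c ω g = C² + 2(C + ε) W(c) + W(c)² < g(c)².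
Hence |μ| < g everywhere, and ε → 0 gives the claim.
-/

theorem forall_lt_of_forall_Ico_lt {α β : Type*} [ConditionallyCompleteLinearOrder α]
    [TopologicalSpace α] [OrderTopology α] [LinearOrder β] [TopologicalSpace β]
    [OrderClosedTopology β] {f g : α → β} {a b : α}
    (hf : ContinuousOn f (Icc a b)) (hg : ContinuousOn g (Icc a b))
    (h : ∀ c ∈ Icc a b, (∀ s ∈ Ico a c, f s < g s) → f c < g c) :
    ∀ t ∈ Icc a b, f t < g t := by
  by_contra! hne
  set A := {t ∈ Icc a b | g t ≤ f t}
  have hbdd : BddBelow A := ⟨a, fun s hs => hs.1.1⟩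
  have hc : sInf A ∈ A := (isClosed_Icc.isClosed_le hg hf).csInf_mem hne hbdd
  refine (h _ hc.1 fun s hs => ?_).not_ge hc.2
  by_contra! hgf
  exact notMem_of_lt_csInf hs.2 hbdd ⟨⟨hs.1, hs.2.le.trans hc.1.2⟩, hgf⟩

-- The primitive is absolutely continuous with derivative `f` a.e., so the product rule integrates.
theorem intervalIntegral.integral_mul_primitive_self {f : ℝ → ℝ} {a b : ℝ}
    (hf : IntervalIntegrable f volume a b) :
    ∫ x in a..b, f x * ∫ t in a..x, f t = (∫ x in a..b, f x) ^ 2 / 2 := by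
  set W : ℝ → ℝ := fun x => ∫ t in a..x, f t
  have hW := hf.absolutelyContinuousOnInterval_intervalIntegral left_mem_uIcc
  have hderiv : ∀ᵐ x, x ∈ uIoc a b →
      deriv W x * W x + W x * deriv W x = 2 * (f x * W x) := by
    filter_upwards [hf.ae_hasDerivAt_integral] with x hx hxab
    rw [(hx (uIoc_subset_uIcc hxab) a left_mem_uIcc).deriv]
    ring
  have := hW.integral_deriv_mul_eq_sub hW
  rw [intervalIntegral.integral_congr_ae hderiv, intervalIntegral.integral_const_mul] at this
  simp only [W, intervalIntegral.integral_same, mul_zero, sub_zero] at this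
  linarith

theorem abs_lt_of_half_sq_le_integral {ω μ : ℝ → ℝ} {t0 c C ε : ℝ} (hC : 0 ≤ C) (hε : 0 < ε)
    (htc : t0 ≤ c) (hω_int : IntervalIntegrable ω volume t0 c)
    (hω_nonneg : ∀ s ∈ Icc t0 c, 0 ≤ ω s) (hμ : ContinuousOn μ (Icc t0 c))
    (hc : (1/2) * μ c ^ 2 ≤ (1/2) * C ^ 2 + ∫ s in t0..c, ω s * μ s)
    (hlt : ∀ s ∈ Ico t0 c, |μ s| < C + ε + ∫ u in t0..s, ω u) :
    |μ c| < C + ε + ∫ u in t0..c, ω u := by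
  set W := ∫ u in t0..c, ω u
  have hW : 0 ≤ W := intervalIntegral.integral_nonneg htc hω_nonneg
  have hprim : ContinuousOn (fun s => ∫ u in t0..s, ω u) (uIcc t0 c) :=
    intervalIntegral.continuousOn_primitive_interval' hω_int left_mem_uIcc
  have hωμ_le : ∫ s in t0..c, ω s * μ s ≤ ∫ s in t0..c, ω s * (C + ε + ∫ u in t0..s, ω u) := by
    refine intervalIntegral.integral_mono_on_of_le_Ioo htc
      (hω_int.mul_continuousOn (by rwa [uIcc_of_le htc]))
      (hω_int.mul_continuousOn (continuousOn_const.add hprim)) fun s hs => ?_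
    exact mul_le_mul_of_nonneg_left ((le_abs_self _).trans (hlt s ⟨hs.1.le, hs.2⟩).le)
      (hω_nonneg s (Ioo_subset_Icc_self hs))
  have hsplit : ∫ s in t0..c, ω s * (C + ε + ∫ u in t0..s, ω u) = (C + ε) * W + W ^ 2 / 2 := by
    simp only [mul_add (ω _) (C + ε)]
    rw [intervalIntegral.integral_add (hω_int.mul_const _) (hω_int.mul_continuousOn hprim),
      intervalIntegral.integral_mul_const, intervalIntegral.integral_mul_primitive_self hω_int]
    ring
  refine abs_lt_of_sq_lt_sq ?_ (by positivity)
  nlinarith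

theorem stmt_1 (t0 T C : ℝ) (hC : 0 ≤ C) (ω μ : ℝ → ℝ)
    (hω_int : IntegrableOn ω (Icc t0 T))
    (hω_nonneg : ∀ t ∈ Icc t0 T, 0 ≤ ω t)
    (hμ : ContinuousOn μ (Icc t0 T))
    (h : ∀ t ∈ Icc t0 T, (1/2) * μ t ^ 2 ≤ (1/2) * C ^ 2 + ∫ s in t0..t, ω s * μ s) :
    ∀ t ∈ Icc t0 T, |μ t| ≤ C + ∫ s in t0..t, ω s := by
  intro t ht
  have hT : t0 ≤ T := ht.1.trans ht.2
  have hω : IntervalIntegrable ω volume t0 T :=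
    (intervalIntegrable_iff_integrableOn_Icc_of_le hT).2 hω_int
  have hprim : ContinuousOn (fun s => ∫ u in t0..s, ω u) (Icc t0 T) := by
    simpa only [uIcc_of_le hT] using
      intervalIntegral.continuousOn_primitive_interval' hω left_mem_uIcc
  refine le_of_forall_pos_le_add fun ε hε => ?_
  have hlt : |μ t| < C + ε + ∫ s in t0..t, ω s :=
    forall_lt_of_forall_Ico_lt hμ.abs (continuousOn_const.add hprim)
    (fun c hc hbefore => abs_lt_of_half_sq_le_integral hC hε hc.1
      (hω.mono_set (uIcc_subset_uIcc left_mem_uIcc (by rwa [uIcc_of_le hT])))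
      (fun s hs => hω_nonneg s ⟨hs.1, hs.2.trans hc.2⟩) (hμ.mono (Icc_subset_Icc_right hc.2))
      (h c hc) hbefore) t ht
  linarith
end

section
/- Let f : ℝ^{n1} → ℝ and g : ℝ^{n2} → ℝ be differentiable convex functions, A, B, b as above. A point (x*,y*,λ*) satisfies -Aᵀλ* = ∇f(x*), -Bᵀλ* = ∇g(y*), Ax*+By* = b if and only if it is a saddle point of the augmented Lagrangian L, i.e., L(x*,y*,λ) ≤ L(x*,y*,λ*) ≤ L(x,y,λ*) for all (x,y,λ). -/
/-!
Forward direction: by the first-order characterisation of convexity, `x*` minimises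
`f x + ⟪λ*, A x⟫` and `y*` minimises `g y + ⟪λ*, B y⟫`; at a feasible point the penalty
vanishes and the multiplier term does not depend on `λ`.

Backward direction: maximality in `λ`, tested at `λ* + r` for the residual
`r = A x* + B y* - b`, gives `‖r‖² ≤ 0`, so `(x*, y*)` is feasible. Minimality in `x` then
makes the derivative of `L` vanish at `x*`; since the residual is zero, the penalty
contributes nothing beyond `Aᵀλ*`.
-/

open Set

section

open InnerProductSpace ContinuousLinearMap
open scoped RealInnerProductSpace Gradient

theorem ConvexOn.add_hasFDerivAt_sub_le {E : Type*} [NormedAddCommGroup E] [NormedSpace ℝ E]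
    {f : E → ℝ} {f' : E →L[ℝ] ℝ} {x : E} (hfc : ConvexOn ℝ univ f)
    (hf : HasFDerivAt f f' x) (y : E) : f x + f' (y - x) ≤ f y := by
  have hline : ConvexOn ℝ univ (f ∘ AffineMap.lineMap (k := ℝ) x y) := by
    simpa using hfc.comp_affineMap (AffineMap.lineMap (k := ℝ) x y)
  have hderiv : HasDerivAt (f ∘ AffineMap.lineMap (k := ℝ) x y) (f' (y - x)) 0 := by
    refine HasFDerivAt.comp_hasDerivAt _ ?_ AffineMap.hasDerivAt_lineMap
    simpa using hf
  have := hline.le_slope_of_hasDerivAt (mem_univ 0) (mem_univ 1) one_pos hderiv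
  simp only [slope_def_field, Function.comp_apply, AffineMap.lineMap_apply_zero,
    AffineMap.lineMap_apply_one, sub_zero, div_one] at this
  linarith

variable {E F : Type*} [NormedAddCommGroup E] [InnerProductSpace ℝ E] [CompleteSpace E]
  [NormedAddCommGroup F] [InnerProductSpace ℝ F]

theorem eq_zero_of_forall_inner_le {r l₀ : F} (h : ∀ l, ⟪l, r⟫ ≤ ⟪l₀, r⟫) : r = 0 := by
  have := h (l₀ + r)
  rw [inner_add_left] at this
  exact real_inner_self_nonpos.mp (by linarith)

variable [CompleteSpace F]

theorem hasFDerivAt_inner_add_half_norm_sq (A : E →L[ℝ] F) (c l : F) (x₀ : E) :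
    HasFDerivAt (fun x => ⟪l, A x + c⟫ + 1 / 2 * ‖A x + c‖ ^ 2)
      (toDual ℝ E (adjoint A (l + (A x₀ + c)))) x₀ := by
  have hu : HasFDerivAt (fun x => A x + c) A x₀ := A.hasFDerivAt.add_const c
  refine (((innerSL ℝ l).hasFDerivAt.comp x₀ hu).add
    (hu.norm_sq.const_mul (1 / 2))).congr_fderiv ?_
  ext v
  simp [toDual_apply_apply, adjoint_inner_left]

theorem neg_adjoint_eq_gradient_of_forall_le {f : E → ℝ} {A : E →L[ℝ] F} {c l : F}
    {x₀ : E} (hf : DifferentiableAt ℝ f x₀)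
    (hmin : ∀ x, f x₀ + ⟪l, A x₀ + c⟫ + 1 / 2 * ‖A x₀ + c‖ ^ 2 ≤
      f x + ⟪l, A x + c⟫ + 1 / 2 * ‖A x + c‖ ^ 2) :
    -(adjoint A (l + (A x₀ + c))) = ∇ f x₀ := by
  have hderiv := hf.hasFDerivAt.add (hasFDerivAt_inner_add_half_norm_sq A c l x₀)
  have hlocal : IsLocalMin (fun x => f x + (⟪l, A x + c⟫ + 1 / 2 * ‖A x + c‖ ^ 2)) x₀ :=
    .of_forall fun x => by simpa only [add_assoc] using hmin x
  have hzero := hlocal.hasFDerivAt_eq_zero hderiv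
  rw [← toDual_gradient, ← map_add, LinearIsometryEquiv.map_eq_zero_iff] at hzero
  rw [neg_eq_iff_add_eq_zero, add_comm, hzero]

theorem add_inner_le_of_neg_adjoint_eq_gradient {f : E → ℝ} {A : E →L[ℝ] F} {l : F}
    {x₀ : E} (hfc : ConvexOn ℝ univ f) (hf : DifferentiableAt ℝ f x₀)
    (h : -(adjoint A l) = ∇ f x₀) (x : E) : f x₀ + ⟪l, A x₀⟫ ≤ f x + ⟪l, A x⟫ := by
  have := hfc.add_hasFDerivAt_sub_le hf.hasGradientAt.hasFDerivAt x
  rw [toDual_apply_apply, ← h, inner_neg_left, adjoint_inner_left, map_sub, inner_sub_right]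
    at this
  linarith

end

theorem stmt_3 (n1 n2 m : ℕ)
    (f : EuclideanSpace ℝ (Fin n1) → ℝ) (g : EuclideanSpace ℝ (Fin n2) → ℝ)
    (hfc : ConvexOn ℝ univ f) (hgc : ConvexOn ℝ univ g)
    (hfd : Differentiable ℝ f) (hgd : Differentiable ℝ g)
    (A : EuclideanSpace ℝ (Fin n1) →L[ℝ] EuclideanSpace ℝ (Fin m))
    (B : EuclideanSpace ℝ (Fin n2) →L[ℝ] EuclideanSpace ℝ (Fin m))
    (b : EuclideanSpace ℝ (Fin m))
    (L : EuclideanSpace ℝ (Fin n1) → EuclideanSpace ℝ (Fin n2) →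
      EuclideanSpace ℝ (Fin m) → ℝ)
    (hL : ∀ x y l, L x y l =
      f x + g y + (inner ℝ l (A x + B y - b) : ℝ) + (1/2) * ‖A x + B y - b‖ ^ 2)
    (xs : EuclideanSpace ℝ (Fin n1)) (ys : EuclideanSpace ℝ (Fin n2))
    (ls : EuclideanSpace ℝ (Fin m)) :
    (-(ContinuousLinearMap.adjoint A ls) = gradient f xs ∧
      -(ContinuousLinearMap.adjoint B ls) = gradient g ys ∧
      A xs + B ys = b) ↔
    (∀ x y l, L xs ys l ≤ L xs ys ls ∧ L xs ys ls ≤ L x y ls) := by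
  simp only [hL]
  constructor
  · rintro ⟨hx, hy, hfeas⟩ x y l
    have hres : A xs + B ys - b = 0 := sub_eq_zero.mpr hfeas
    have hfx := add_inner_le_of_neg_adjoint_eq_gradient hfc (hfd xs) hx x
    have hgy := add_inner_le_of_neg_adjoint_eq_gradient hgc (hgd ys) hy y
    have hb : inner ℝ ls b = inner ℝ ls (A xs) + inner ℝ ls (B ys) := by
      rw [← hfeas, inner_add_right]
    have hpen : 0 ≤ 1 / 2 * ‖A x + B y - b‖ ^ 2 := by positivity
    rw [hres]
    simp only [inner_zero_right, norm_zero, inner_sub_right, inner_add_right]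
    constructor <;> linarith
  · intro h
    have hres : A xs + B ys - b = 0 :=
      eq_zero_of_forall_inner_le fun l => by linarith [(h xs ys l).1]
    refine ⟨?_, ?_, sub_eq_zero.mp hres⟩
    · have hx := neg_adjoint_eq_gradient_of_forall_le (A := A) (c := B ys - b) (l := ls)
        (hfd xs)
        fun x => by
          have := (h x ys ls).2
          rw [add_sub_assoc, add_sub_assoc] at this
          linarith
      rwa [← add_sub_assoc, hres, add_zero] at hx
    · have hy := neg_adjoint_eq_gradient_of_forall_le (A := B) (c := A xs - b) (l := ls)
        (hgd ys)
        fun y => by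
          have := (h xs y ls).2
          simp only [add_sub_right_comm (A xs), add_comm (A xs - b)] at this
          linarith
      rwa [add_comm (B ys), sub_add_eq_add_sub, hres, add_zero] at hy
end

section
/- Let r ∈ [0,1], t0 ≥ e, and γ(t) = 1/(t (ln t)^r) for t ≥ t0. Then for every β ∈ (0, 1/3], γ''(t) ≥ 2β²γ(t)³ for all t ≥ t0. -/
/-!
With `L = log t ≥ 1`, the weight `γ(t) = 1 / (t L^r)` has
`γ''(t) = (2L² + 3rL + r(r+1)) / (t³ L^(r+2))`. For `r ≥ 0` the numerator is at least `2L²`,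
so `γ''(t) ≥ 2 / (t³ L^r) ≥ 2 / (t³ L^(3r)) = 2γ(t)³`, and `β² ≤ 1` does the rest.
-/

open Real Filter

noncomputable def invMulLogRpow (r s : ℝ) : ℝ := 1 / (s * log s ^ r)

lemma invMulLogRpow_pos {r s : ℝ} (hs : 1 < s) : 0 < invMulLogRpow r s :=
  one_div_pos.2 (mul_pos (by linarith) (rpow_pos_of_pos (log_pos hs) r))

section

variable {r s : ℝ}

lemma hasDerivAt_log_rpow (p : ℝ) (hs : 1 < s) :
    HasDerivAt (fun x ↦ log x ^ p) (s⁻¹ * p * log s ^ (p - 1)) s :=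
  (hasDerivAt_log (by linarith)).rpow_const (Or.inl (log_pos hs).ne')

lemma hasDerivAt_invMulLogRpow (hs : 1 < s) :
    HasDerivAt (invMulLogRpow r) (-(log s + r) / (s ^ 2 * log s ^ (r + 1))) s := by
  have hL : 0 < log s := log_pos hs
  have hden : s * log s ^ r ≠ 0 := (mul_pos (by linarith) (rpow_pos_of_pos hL r)).ne'
  have h := ((hasDerivAt_id s).mul (hasDerivAt_log_rpow r hs)).inv hden
  rw [show invMulLogRpow r = fun x ↦ (x * log x ^ r)⁻¹ from funext fun _ ↦ one_div _]
  refine h.congr_deriv ?_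
  simp only [Pi.mul_apply, id]
  rw [rpow_sub hL, rpow_add hL, rpow_one]
  have : s ≠ 0 := by positivity
  field_simp

lemma hasDerivAt_deriv_invMulLogRpow (hs : 1 < s) :
    HasDerivAt (deriv (invMulLogRpow r))
      ((2 * log s ^ 2 + 3 * r * log s + r * (r + 1)) / (s ^ 3 * log s ^ (r + 2))) s := by
  have hL : 0 < log s := log_pos hs
  have hden : s ^ 2 * log s ^ (r + 1) ≠ 0 := (mul_pos (by positivity) (rpow_pos_of_pos hL _)).ne'
  have h := (((hasDerivAt_log (by positivity : s ≠ 0)).add_const r).neg).div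
    (((hasDerivAt_pow 2 s).mul (hasDerivAt_log_rpow (r + 1) hs))) hden
  have hderiv : deriv (invMulLogRpow r) =ᶠ[nhds s]
      fun x ↦ -(log x + r) / (x ^ 2 * log x ^ (r + 1)) := by
    filter_upwards [Ioi_mem_nhds hs] with x hx
    exact (hasDerivAt_invMulLogRpow hx).deriv
  refine (h.congr_of_eventuallyEq hderiv).congr_deriv ?_
  simp only [Pi.mul_apply, Pi.neg_apply, Nat.cast_ofNat]
  rw [add_sub_cancel_right, rpow_add hL, rpow_add hL, rpow_one, rpow_two]
  have : s ≠ 0 := by positivity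
  field_simp
  ring

lemma deriv_deriv_invMulLogRpow (hs : 1 < s) :
    deriv (deriv (invMulLogRpow r)) s =
      (2 * log s ^ 2 + 3 * r * log s + r * (r + 1)) / (s ^ 3 * log s ^ (r + 2)) :=
  (hasDerivAt_deriv_invMulLogRpow hs).deriv

end

lemma two_mul_invMulLogRpow_pow_three_le {r t : ℝ} (hr : 0 ≤ r) (ht : exp 1 ≤ t) :
    2 * invMulLogRpow r t ^ 3 ≤ deriv (deriv (invMulLogRpow r)) t := by
  have ht1 : 1 < t := (one_lt_exp_iff.mpr one_pos).trans_le ht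
  have hL : 1 ≤ log t := (le_log_iff_exp_le (by linarith)).mpr ht
  have hX : 1 ≤ log t ^ r := one_le_rpow hL hr
  have htpos : 0 < t := by linarith
  rw [deriv_deriv_invMulLogRpow ht1, rpow_add (by linarith), rpow_two, invMulLogRpow]
  calc 2 * (1 / (t * log t ^ r)) ^ 3 = 2 / (t ^ 3 * (log t ^ r) ^ 3) := by field_simp
    _ ≤ 2 / (t ^ 3 * log t ^ r) := by gcongr; exact le_self_pow₀ hX (by norm_num)
    _ = 2 * log t ^ 2 / (t ^ 3 * (log t ^ r * log t ^ 2)) := by field_simp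
    _ ≤ _ := by gcongr; nlinarith

theorem stmt_7 (r t0 : ℝ) (hr : r ∈ Set.Icc (0:ℝ) 1) (ht0 : Real.exp 1 ≤ t0) :
    ∀ β ∈ Set.Ioc (0:ℝ) (1/3), ∀ t ≥ t0,
      2 * β ^ 2 * (1 / (t * Real.log t ^ r)) ^ 3 ≤
        deriv (deriv (fun s : ℝ => 1 / (s * Real.log s ^ r))) t := by
  rintro β ⟨hβ0, hβ3⟩ t ht
  have ht1 : 1 < t := (one_lt_exp_iff.mpr one_pos).trans_le (ht0.trans ht)
  have hγ : 0 < invMulLogRpow r t ^ 3 := pow_pos (invMulLogRpow_pos ht1) 3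
  have hβ : β ^ 2 ≤ 1 := by nlinarith
  calc 2 * β ^ 2 * invMulLogRpow r t ^ 3 ≤ 2 * invMulLogRpow r t ^ 3 := by nlinarith
    _ ≤ deriv (deriv (invMulLogRpow r)) t :=
      two_mul_invMulLogRpow_pow_three_le hr.1 (ht0.trans ht)
end

section
/- Let γ : [t0,∞) → (0,∞) be nonincreasing, C², with γ''(t) ≥ 2β²γ(t)³ for some β ∈ (0,1/3), β0 ∈ [2β,1-β), δ(t) = 1/(β0γ(t)), and p(t) = exp(∫_{t0}^t γ). Suppose (x,y,λ) : [t0,T) → ℝ^{n1}×ℝ^{n2}×ℝ^m solves the C² system ẍ + γẋ = -∇f(x) - Aᵀ(λ+δλ̇) - Aᵀ(Ax+By-b), ÿ + γẏ = -∇g(y) - Bᵀ(λ+δλ̇) - Bᵀ(Ax+By-b), λ̈ + γλ̇ = A(x+δẋ)+B(y+δẏ)-b, where f, g are convex differentiable and (x*,y*,λ*) is a KKT point. Then with θ(t) = β0 p(t)^β γ(t), η(t) = -β0 p(t)^{2β}((β0+2β-1)γ(t)²+γ'(t)), the energy E(t) = p(t)^{2β}(L(x(t),y(t),λ*)-L(x*,y*,λ*))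 + (1/2)‖θ(t)(x(t)-x*)+p(t)^βẋ(t)‖² + (η(t)/2)‖x(t)-x*‖² + (1/2)‖θ(t)(y(t)-y*)+p(t)^βẏ(t)‖² + (η(t)/2)‖y(t)-y*‖² + (1/2)‖θ(t)(λ(t)-λ*)+p(t)^βλ̇(t)‖² + (η(t)/2)‖λ(t)-λ*‖² is nonincreasing on [t0,T). -/
/-!
Write `r = p^β`, so that `r' = βγr`. Differentiating `E` along the flow, the coupling terms produced
by the three equations cancel because `δ = 1/(β₀γ)`, and what remains is `r²` times
`2βγ(L - L*) - β₀γ(⟨∇f(x), x-x*⟩ + ⟨∇g(y), y-y*⟩ + ⟨λ*, R⟩ + ‖R‖²) + C Σ‖z-z*‖² + (β₀+β-1)γ Σ‖ż‖²`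
with `R = Ax + By - b` and `C = β₀(β(1-2β)γ³ + (1-3β)γγ' - γ''/2)`. By convexity and the KKT
conditions, `½‖R‖² ≤ L - L*` and `L - L* + ½‖R‖²` is at most the bracket multiplying `β₀γ`, so the
first two terms add up to at most `(2β - β₀)γ(L - L*) ≤ 0`. Moreover `C ≤ β₀(1-3β)γ(γ' + βγ²)`,
and `h = γ' + βγ²` is nonpositive: `γ'' ≥ 2β²γ³` gives `h' ≥ 2βγh`, so `h / r²` is nondecreasing;
if `h(t) > 0`, then `γ` stays bounded below on `[t, ∞)`, `r` grows exponentially and `h` becomes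
unbounded, whereas `h ≤ βγ² ≤ βγ(t)²` there.
-/

open Set Filter Topology ContinuousLinearMap

local notation "⟪" x ", " y "⟫" => @inner ℝ _ _ x y

theorem Convex.monotoneOn_of_hasDerivWithinAt_nonneg {D : Set ℝ} (hD : Convex ℝ D)
    {f f' : ℝ → ℝ} (hf : ∀ t ∈ D, HasDerivWithinAt f (f' t) D t)
    (hf' : ∀ t ∈ interior D, 0 ≤ f' t) : MonotoneOn f D :=
  _root_.monotoneOn_of_hasDerivWithinAt_nonneg hD (fun t ht => (hf t ht).continuousWithinAt)
    (fun t ht => (hf t (interior_subset ht)).mono interior_subset) hf'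

theorem Convex.antitoneOn_of_hasDerivWithinAt_nonpos {D : Set ℝ} (hD : Convex ℝ D)
    {f f' : ℝ → ℝ} (hf : ∀ t ∈ D, HasDerivWithinAt f (f' t) D t)
    (hf' : ∀ t ∈ interior D, f' t ≤ 0) : AntitoneOn f D :=
  _root_.antitoneOn_of_hasDerivWithinAt_nonpos hD (fun t ht => (hf t ht).continuousWithinAt)
    (fun t ht => (hf t (interior_subset ht)).mono interior_subset) hf'

theorem Convex.monotoneOn_div_of_hasDerivWithinAt {D : Set ℝ} (hD : Convex ℝ D)
    {φ φ' ρ g : ℝ → ℝ} (hφ : ∀ t ∈ D, HasDerivWithinAt φ (φ' t) D t)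
    (hρ : ∀ t ∈ D, HasDerivWithinAt ρ (g t * ρ t) D t) (hρpos : ∀ t ∈ D, 0 < ρ t)
    (hgφ : ∀ t ∈ D, g t * φ t ≤ φ' t) : MonotoneOn (fun t => φ t / ρ t) D := by
  refine hD.monotoneOn_of_hasDerivWithinAt_nonneg
    (fun t ht => (hφ t ht).div (hρ t ht) (hρpos t ht).ne') fun t ht => ?_
  have hρt := hρpos t (interior_subset ht)
  have hgφt := hgφ t (interior_subset ht)
  rw [show (φ' t * ρ t - φ t * (g t * ρ t)) / ρ t ^ 2 = (φ' t - g t * φ t) / ρ t by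
    field_simp]
  exact div_nonneg (by linarith) hρt.le

theorem hasDerivWithinAt_integral_Ici {f : ℝ → ℝ} {a t : ℝ} (hf : ContinuousOn f (Ici a))
    (ht : t ∈ Ici a) : HasDerivWithinAt (fun u => ∫ s in a..u, f s) (f t) (Ici a) t := by
  have hint : IntervalIntegrable f MeasureTheory.volume a t :=
    (hf.mono (uIcc_of_le (mem_Ici.1 ht) ▸ Icc_subset_Ici_self)).intervalIntegrable
  rcases (mem_Ici.1 ht).eq_or_lt with rfl | hat
  · exact intervalIntegral.integral_hasDerivWithinAt_right hint
      ((hf.mono Ioi_subset_Ici_self).stronglyMeasurableAtFilter_nhdsWithin measurableSet_Ioi _)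
      ((hf _ ht).mono Ioi_subset_Ici_self)
  · exact (intervalIntegral.integral_hasDerivAt_right hint
      ((hf.mono Ioi_subset_Ici_self).stronglyMeasurableAtFilter isOpen_Ioi t hat)
      (hf.continuousAt (Ici_mem_nhds hat))).hasDerivWithinAt

theorem hasDerivWithinAt_exp_integral_rpow {γ : ℝ → ℝ} {a t : ℝ} (β : ℝ)
    (hγ : ContinuousOn γ (Ici a)) (ht : t ∈ Ici a) :
    HasDerivWithinAt (fun u => Real.exp (∫ s in a..u, γ s) ^ β)
      (β * γ t * Real.exp (∫ s in a..t, γ s) ^ β) (Ici a) t := by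
  simp only [← Real.exp_mul]
  exact (((hasDerivWithinAt_integral_Ici hγ ht).mul_const β).exp).congr_deriv (by ring)

theorem accPt_principal_Ici_s17 {a t : ℝ} (ht : t ∈ Ici a) : AccPt t (𝓟 (Ici a)) := by
  rw [accPt_principal_iff_nhdsWithin]
  exact (inferInstance : (𝓝[>] t).NeBot).mono <| nhdsWithin_mono t fun s hs =>
    ⟨mem_Ici.2 (le_trans ht (le_of_lt hs)), ne_of_gt hs⟩

section Damping

variable {γ γ' γ'' r : ℝ → ℝ} {a β : ℝ}

theorem monotoneOn_of_hasDerivWithinAt_mul (hβ : 0 ≤ β) (hγpos : ∀ t ∈ Ici a, 0 < γ t)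
    (hr : ∀ t ∈ Ici a, HasDerivWithinAt r (β * γ t * r t) (Ici a) t)
    (hrpos : ∀ t ∈ Ici a, 0 < r t) : MonotoneOn r (Ici a) :=
  (convex_Ici a).monotoneOn_of_hasDerivWithinAt_nonneg hr fun t ht =>
    have := hγpos t (interior_subset ht); have := hrpos t (interior_subset ht); by positivity

theorem mul_exp_le_of_hasDerivWithinAt_mul {c : ℝ} (hβ : 0 ≤ β) (hc : ∀ t ∈ Ici a, c ≤ γ t)
    (hr : ∀ t ∈ Ici a, HasDerivWithinAt r (β * γ t * r t) (Ici a) t)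
    (hrpos : ∀ t ∈ Ici a, 0 < r t) {t : ℝ} (ht : t ∈ Ici a) :
    r a * Real.exp (β * c * (t - a)) ≤ r t := by
  have hmono : MonotoneOn (fun s => r s / Real.exp (β * c * s)) (Ici a) := by
    refine (convex_Ici a).monotoneOn_div_of_hasDerivWithinAt (g := fun _ => β * c) hr
      (fun s hs => ?_) (fun s _ => Real.exp_pos _) fun s hs => ?_
    · exact (((hasDerivWithinAt_id s _).const_mul (β * c)).exp).congr_deriv (by simp; ring)
    · exact mul_le_mul_of_nonneg_right (mul_le_mul_of_nonneg_left (hc s hs) hβ) (hrpos s hs).le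
  have h := hmono self_mem_Ici ht ht
  simp only at h
  rw [mul_sub, Real.exp_sub, mul_div_assoc', div_le_iff₀ (Real.exp_pos _)]
  rwa [div_le_div_iff₀ (Real.exp_pos _) (Real.exp_pos _)] at h

theorem monotoneOn_deriv_add_mul_sq_div_sq (hγpos : ∀ t ∈ Ici a, 0 < γ t)
    (hγ : ∀ t ∈ Ici a, HasDerivWithinAt γ (γ' t) (Ici a) t)
    (hγ' : ∀ t ∈ Ici a, HasDerivWithinAt γ' (γ'' t) (Ici a) t)
    (hγ'' : ∀ t ∈ Ici a, 2 * β ^ 2 * γ t ^ 3 ≤ γ'' t)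
    (hr : ∀ t ∈ Ici a, HasDerivWithinAt r (β * γ t * r t) (Ici a) t)
    (hrpos : ∀ t ∈ Ici a, 0 < r t) :
    MonotoneOn (fun t => (γ' t + β * γ t ^ 2) / r t ^ 2) (Ici a) := by
  refine (convex_Ici a).monotoneOn_div_of_hasDerivWithinAt
    (φ' := fun t => γ'' t + β * (2 * γ t * γ' t)) (g := fun t => 2 * β * γ t)
    (fun t ht => ?_) (fun t ht => ?_) (fun t ht => pow_pos (hrpos t ht) 2) fun t ht => ?_
  · exact ((hγ' t ht).add (((hγ t ht).pow 2).const_mul β)).congr_deriv (by simp)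
  · exact ((hr t ht).pow 2).congr_deriv (by simp; ring)
  · have := hγ'' t ht; have := hγpos t ht
    nlinarith

theorem exists_lt_of_monotoneOn_div_sq {φ ρ : ℝ → ℝ} {t k : ℝ} (hk : 0 < k) (hφ : 0 < φ t)
    (hρ : ∀ s ∈ Ici t, 0 < ρ s) (hmono : MonotoneOn (fun s => φ s / ρ s ^ 2) (Ici t))
    (hgrowth : ∀ s ∈ Ici t, ρ t * Real.exp (k * (s - t)) ≤ ρ s) (M : ℝ) :
    ∃ s ∈ Ici t, M < φ s := by
  set N := |M| / φ t
  have hN : 0 ≤ N := by positivity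
  have hs : t + N / k ∈ Ici t := mem_Ici.2 (le_add_of_nonneg_right (by positivity))
  refine ⟨t + N / k, hs, ?_⟩
  have h1 := hmono self_mem_Ici hs hs
  simp only at h1
  have hρt := hρ t self_mem_Ici
  rw [div_le_div_iff₀ (pow_pos hρt 2) (pow_pos (hρ _ hs) 2)] at h1
  have h2 := hgrowth _ hs
  rw [show k * (t + N / k - t) = N by field_simp; ring] at h2
  have h3 : ρ t * (N + 1) ≤ ρ (t + N / k) :=
    le_trans (mul_le_mul_of_nonneg_left (Real.add_one_le_exp N) hρt.le) h2
  have h4 := pow_le_pow_left₀ (mul_pos hρt (by linarith)).le h3 2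
  have hNφ : N * φ t = |M| := div_mul_cancel₀ _ hφ.ne'
  have h5 : φ t * (N + 1) ^ 2 ≤ φ (t + N / k) := by
    have := pow_pos hρt 2
    nlinarith [mul_le_mul_of_nonneg_left h4 hφ.le]
  nlinarith [le_abs_self M, mul_nonneg hφ.le (sq_nonneg N), mul_nonneg hφ.le hN]

theorem deriv_add_mul_sq_nonpos (hβ : 0 < β) (hγpos : ∀ t ∈ Ici a, 0 < γ t)
    (hγanti : AntitoneOn γ (Ici a)) (hγ : ∀ t ∈ Ici a, HasDerivWithinAt γ (γ' t) (Ici a) t)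
    (hγ' : ∀ t ∈ Ici a, HasDerivWithinAt γ' (γ'' t) (Ici a) t)
    (hγ'' : ∀ t ∈ Ici a, 2 * β ^ 2 * γ t ^ 3 ≤ γ'' t)
    (hr : ∀ t ∈ Ici a, HasDerivWithinAt r (β * γ t * r t) (Ici a) t)
    (hrpos : ∀ t ∈ Ici a, 0 < r t) {t : ℝ} (ht : t ∈ Ici a) : γ' t + β * γ t ^ 2 ≤ 0 := by
  by_contra! hpos
  set h := fun s => γ' s + β * γ s ^ 2 with h_def
  replace hpos : 0 < h t := hpos
  have hsub : Ici t ⊆ Ici a := Ici_subset_Ici.2 ht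
  have hh_le : ∀ s ∈ Ici t, h s ≤ β * γ s ^ 2 := fun s hs => by
    have := (hγ s (hsub hs)).nonpos_of_antitoneOn (accPt_principal_Ici_s17 (hsub hs)) hγanti
    simp only [h_def]; linarith
  have hh_div := (monotoneOn_deriv_add_mul_sq_div_sq hγpos hγ hγ' hγ'' hr hrpos).mono hsub
  have hr_mono := monotoneOn_of_hasDerivWithinAt_mul hβ.le hγpos hr hrpos
  have hrt := hrpos t ht
  have hh_ge : ∀ s ∈ Ici t, h t ≤ h s := fun s hs => by
    have h1 := hh_div self_mem_Ici hs hs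
    have h2 := pow_le_pow_left₀ hrt.le (hr_mono ht (hsub hs) hs) 2
    simp only at h1
    rw [div_le_div_iff₀ (pow_pos hrt 2) (pow_pos (hrpos s (hsub hs)) 2)] at h1
    nlinarith [mul_le_mul_of_nonneg_left h2 hpos.le, pow_pos hrt 2]
  have hγt := hγpos t ht
  have hγ_ge : ∀ s ∈ Ici t, h t / (β * γ t) ≤ γ s := fun s hs => by
    have hγs := hγpos s (hsub hs)
    rw [div_le_iff₀ (by positivity)]
    nlinarith [hh_ge s hs, hh_le s hs,
      mul_le_mul_of_nonneg_left (hγanti ht (hsub hs) hs) (mul_pos hβ hγs).le]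
  obtain ⟨s, hs, hlt⟩ := exists_lt_of_monotoneOn_div_sq (by positivity) hpos
    (fun s hs => hrpos s (hsub hs)) hh_div
    (fun s hs => mul_exp_le_of_hasDerivWithinAt_mul hβ.le hγ_ge
      (fun u hu => (hr u (hsub hu)).mono hsub) (fun u hu => hrpos u (hsub hu)) hs) (β * γ t ^ 2)
  have := pow_le_pow_left₀ (hγpos s (hsub hs)).le (hγanti ht (hsub hs) hs) 2
  nlinarith [hh_le s hs]

end Damping

section Gradient

variable {E : Type*} [NormedAddCommGroup E] [InnerProductSpace ℝ E] [CompleteSpace E]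
  {f : E → ℝ} {f' : E}

theorem HasGradientAt.comp_hasDerivWithinAt {z : ℝ → E} {z' : E} {s : Set ℝ} {t : ℝ}
    (hf : HasGradientAt f f' (z t)) (hz : HasDerivWithinAt z z' s t) :
    HasDerivWithinAt (fun u => f (z u)) ⟪f', z'⟫ s t :=
  (hf.hasFDerivAt.comp_hasDerivWithinAt t hz).congr_deriv (by simp)

theorem ConvexOn.add_inner_le_of_hasGradientAt (hf : ConvexOn ℝ univ f) {z : E}
    (hf' : HasGradientAt f f' z) (w : E) : f z + ⟪f', w - z⟫ ≤ f w := by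
  have hline : ConvexOn ℝ univ (f ∘ AffineMap.lineMap (k := ℝ) z w) := by
    simpa using hf.comp_affineMap (AffineMap.lineMap z w)
  have hderiv : HasDerivAt (f ∘ AffineMap.lineMap (k := ℝ) z w) ⟪f', w - z⟫ 0 := by
    rw [← AffineMap.lineMap_apply_zero (k := ℝ) z w] at hf'
    exact (hf'.hasFDerivAt.comp_hasDerivAt 0 AffineMap.hasDerivAt_lineMap).congr_deriv (by simp)
  have := hline.le_slope_of_hasDerivAt (mem_univ 0) (mem_univ 1) one_pos hderiv
  simp [slope_def_field] at this
  linarith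

end Gradient

section DampedOscillator

variable {E : Type*} [NormedAddCommGroup E] [InnerProductSpace ℝ E]

-- With `r = p^β`, the coefficients are the `θ` and `η` of the energy.
noncomputable def dampedEnergy (β β0 r γ γ' : ℝ) (u v : E) : ℝ :=
  (1 / 2) * ‖(β0 * r * γ) • u + r • v‖ ^ 2
    + (-β0 * r ^ 2 * ((β0 + 2 * β - 1) * γ ^ 2 + γ') / 2) * ‖u‖ ^ 2

theorem hasDerivWithinAt_dampedEnergy {z v : ℝ → E} {zs v' F : E} {r γ γ' : ℝ → ℝ}
    {s : Set ℝ} {t β β0 γ'' : ℝ} (hz : HasDerivWithinAt z (v t) s t)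
    (hv : HasDerivWithinAt v v' s t) (hode : v' + γ t • v t = F)
    (hr : HasDerivWithinAt r (β * γ t * r t) s t) (hγ : HasDerivWithinAt γ (γ' t) s t)
    (hγ' : HasDerivWithinAt γ' γ'' s t) :
    HasDerivWithinAt (fun u => dampedEnergy β β0 (r u) (γ u) (γ' u) (z u - zs) (v u))
      (r t ^ 2 * (β0 * (β * (1 - 2 * β) * γ t ^ 3 + (1 - 3 * β) * γ t * γ' t - γ'' / 2)
          * ‖z t - zs‖ ^ 2 + (β0 + β - 1) * γ t * ‖v t‖ ^ 2
        + ⟪(β0 * γ t) • (z t - zs) + v t, F⟫)) s t := by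
  have hu := hz.sub_const zs
  have hw := (((hr.const_mul β0).mul hγ).smul hu).add (hr.smul hv)
  have hη := ((hr.pow 2).const_mul (-β0)).mul (((hγ.pow 2).const_mul (β0 + 2 * β - 1)).add hγ')
  refine (((hw.norm_sq).const_mul (1 / 2)).add ((hη.div_const 2).mul hu.norm_sq)).congr_deriv ?_
  rw [eq_sub_of_add_eq hode]
  simp only [Pi.add_apply, Pi.mul_apply, Pi.smul_apply', Pi.pow_apply]
  generalize z t - zs = u
  simp only [inner_add_left, inner_add_right, inner_sub_right, real_inner_smul_left,
    real_inner_smul_right, real_inner_self_eq_norm_sq, real_inner_comm u (v t)]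
  push_cast
  ring

end DampedOscillator

section Saddle

variable {E₁ E₂ F : Type*} [NormedAddCommGroup E₁] [InnerProductSpace ℝ E₁] [CompleteSpace E₁]
  [NormedAddCommGroup E₂] [InnerProductSpace ℝ E₂] [CompleteSpace E₂]
  [NormedAddCommGroup F] [InnerProductSpace ℝ F]
  {f : E₁ → ℝ} {g : E₂ → ℝ} {A : E₁ →L[ℝ] F} {B : E₂ →L[ℝ] F} {b : F}
  {xs : E₁} {ys : E₂} {ls : F}

variable (f g A B b) in
noncomputable def augLagrangian (x : E₁) (y : E₂) (l : F) : ℝ :=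
  f x + g y + ⟪l, A x + B y - b⟫ + (1 / 2) * ‖A x + B y - b‖ ^ 2

variable (f g A B b xs ys ls) in
noncomputable def saddleEnergy (β β0 r γ γ' : ℝ) (x x' : E₁) (y y' : E₂) (l l' : F) : ℝ :=
  r ^ 2 * (augLagrangian f g A B b x y ls - augLagrangian f g A B b xs ys ls)
    + dampedEnergy β β0 r γ γ' (x - xs) x' + dampedEnergy β β0 r γ γ' (y - ys) y'
    + dampedEnergy β β0 r γ γ' (l - ls) l'

theorem hasDerivWithinAt_augLagrangian {x : ℝ → E₁} {y : ℝ → E₂} {x' gx : E₁} {y' gy : E₂}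
    {s : Set ℝ} {t : ℝ} (l : F) (hf : HasGradientAt f gx (x t)) (hg : HasGradientAt g gy (y t))
    (hx : HasDerivWithinAt x x' s t) (hy : HasDerivWithinAt y y' s t) :
    HasDerivWithinAt (fun u => augLagrangian f g A B b (x u) (y u) l)
      (⟪gx, x'⟫ + ⟪gy, y'⟫ + ⟪l + (A (x t) + B (y t) - b), A x' + B y'⟫) s t := by
  have hR := ((A.hasFDerivAt.comp_hasDerivWithinAt t hx).add
    (B.hasFDerivAt.comp_hasDerivWithinAt t hy)).sub_const b
  refine ((((hf.comp_hasDerivWithinAt hx).add (hg.comp_hasDerivWithinAt hy)).add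
    ((hasDerivWithinAt_const t s l).inner ℝ hR)).add (hR.norm_sq.const_mul (1 / 2))).congr_deriv ?_
  simp only [Pi.add_apply, Function.comp_apply, inner_add_left, inner_zero_left]
  ring

theorem inner_saddle_coupling [CompleteSpace F] (x x' gx : E₁) (y y' gy : E₂) (l l' : F) {κ δ : ℝ}
    (hb : A xs + B ys = b) (hκδ : κ * δ = 1) :
    ⟪gx, x'⟫ + ⟪gy, y'⟫ + ⟪ls + (A x + B y - b), A x' + B y'⟫
      + ⟪κ • (x - xs) + x', -gx - adjoint A (l + δ • l') - adjoint A (A x + B y - b)⟫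
      + ⟪κ • (y - ys) + y', -gy - adjoint B (l + δ • l') - adjoint B (A x + B y - b)⟫
      + ⟪κ • (l - ls) + l', A (x + δ • x') + B (y + δ • y') - b⟫
      = -κ * (⟪gx, x - xs⟫ + ⟪gy, y - ys⟫ + ⟪ls, A x + B y - b⟫ + ‖A x + B y - b‖ ^ 2) := by
  subst hb
  -- the terms carrying `δ` cancel against the others only through `κ * δ = 1`
  linear_combination (norm := skip)
    (⟪l - ls, A x' + B y'⟫ - ⟪l', A x + B y - (A xs + B ys)⟫) * hκδ
  simp only [map_add, map_sub, map_smul, inner_add_left, inner_add_right, inner_sub_left,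
    inner_sub_right, inner_neg_right, real_inner_smul_left, real_inner_smul_right,
    adjoint_inner_right, ← real_inner_self_eq_norm_sq, real_inner_comm]
  ring

theorem half_norm_sq_le_augLagrangian_sub [CompleteSpace F] (hf : ConvexOn ℝ univ f)
    (hg : ConvexOn ℝ univ g)
    (hfs : HasGradientAt f (-adjoint A ls) xs) (hgs : HasGradientAt g (-adjoint B ls) ys)
    (hb : A xs + B ys = b) (x : E₁) (y : E₂) :
    (1 / 2) * ‖A x + B y - b‖ ^ 2
      ≤ augLagrangian f g A B b x y ls - augLagrangian f g A B b xs ys ls := by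
  subst hb
  have hfx := hf.add_inner_le_of_hasGradientAt hfs x
  have hgy := hg.add_inner_le_of_hasGradientAt hgs y
  have hR : ⟪ls, A x + B y - (A xs + B ys)⟫ = ⟪ls, A (x - xs)⟫ + ⟪ls, B (y - ys)⟫ := by
    rw [map_sub, map_sub, ← inner_add_right]; congr 1; abel
  simp only [inner_neg_left, adjoint_inner_left] at hfx hgy
  simp only [augLagrangian, sub_self, inner_zero_right, norm_zero, hR]
  linarith

theorem hasDerivWithinAt_saddleEnergy [CompleteSpace F] {x x' : ℝ → E₁} {y y' : ℝ → E₂}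
    {l l' : ℝ → F} {x'' gx : E₁} {y'' gy : E₂} {l'' : F} {r γ γ' : ℝ → ℝ} {s : Set ℝ}
    {t β β0 γ'' δ : ℝ} (hb : A xs + B ys = b) (hδ : β0 * γ t * δ = 1)
    (hf : HasGradientAt f gx (x t)) (hg : HasGradientAt g gy (y t))
    (hx : HasDerivWithinAt x (x' t) s t) (hx' : HasDerivWithinAt x' x'' s t)
    (hy : HasDerivWithinAt y (y' t) s t) (hy' : HasDerivWithinAt y' y'' s t)
    (hl : HasDerivWithinAt l (l' t) s t) (hl' : HasDerivWithinAt l' l'' s t)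
    (hr : HasDerivWithinAt r (β * γ t * r t) s t) (hγ : HasDerivWithinAt γ (γ' t) s t)
    (hγ' : HasDerivWithinAt γ' γ'' s t)
    (hodex : x'' + γ t • x' t =
      -gx - adjoint A (l t + δ • l' t) - adjoint A (A (x t) + B (y t) - b))
    (hodey : y'' + γ t • y' t =
      -gy - adjoint B (l t + δ • l' t) - adjoint B (A (x t) + B (y t) - b))
    (hodel : l'' + γ t • l' t = A (x t + δ • x' t) + B (y t + δ • y' t) - b) :
    HasDerivWithinAt (fun u => saddleEnergy f g A B b xs ys ls β β0 (r u) (γ u) (γ' u)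
        (x u) (x' u) (y u) (y' u) (l u) (l' u))
      (r t ^ 2 * (2 * β * γ t * (augLagrangian f g A B b (x t) (y t) ls
          - augLagrangian f g A B b xs ys ls)
        - β0 * γ t * (⟪gx, x t - xs⟫ + ⟪gy, y t - ys⟫ + ⟪ls, A (x t) + B (y t) - b⟫
          + ‖A (x t) + B (y t) - b‖ ^ 2)
        + β0 * (β * (1 - 2 * β) * γ t ^ 3 + (1 - 3 * β) * γ t * γ' t - γ'' / 2)
          * (‖x t - xs‖ ^ 2 + ‖y t - ys‖ ^ 2 + ‖l t - ls‖ ^ 2)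
        + (β0 + β - 1) * γ t * (‖x' t‖ ^ 2 + ‖y' t‖ ^ 2 + ‖l' t‖ ^ 2))) s t := by
  have hL := hasDerivWithinAt_augLagrangian (A := A) (B := B) (b := b) ls hf hg hx hy
  refine (((((hr.pow 2).mul (hL.sub_const _)).add
    (hasDerivWithinAt_dampedEnergy hx hx' hodex hr hγ hγ')).add
    (hasDerivWithinAt_dampedEnergy hy hy' hodey hr hγ hγ')).add
    (hasDerivWithinAt_dampedEnergy hl hl' hodel hr hγ hγ')).congr_deriv ?_
  simp only [Pi.pow_apply]
  linear_combination
    r t ^ 2 * inner_saddle_coupling (x t) (x' t) gx (y t) (y' t) gy (l t) (l' t) hb hδ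

theorem saddle_dissipation_nonpos [CompleteSpace F] (hf : ConvexOn ℝ univ f)
    (hg : ConvexOn ℝ univ g) (hfs : HasGradientAt f (-adjoint A ls) xs)
    (hgs : HasGradientAt g (-adjoint B ls) ys) (hb : A xs + B ys = b)
    {x gx x' : E₁} {y gy y' : E₂} {l l' : F} (hfx : HasGradientAt f gx x)
    (hgy : HasGradientAt g gy y) {β β0 γ γ' γ'' : ℝ} (hβ : 0 ≤ β) (hβ3 : β ≤ 1 / 3)
    (hβ0 : 2 * β ≤ β0) (hβ01 : β0 ≤ 1 - β) (hγ : 0 < γ) (hγ' : γ' + β * γ ^ 2 ≤ 0)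
    (hγ'' : 2 * β ^ 2 * γ ^ 3 ≤ γ'') :
    2 * β * γ * (augLagrangian f g A B b x y ls - augLagrangian f g A B b xs ys ls)
      - β0 * γ * (⟪gx, x - xs⟫ + ⟪gy, y - ys⟫ + ⟪ls, A x + B y - b⟫ + ‖A x + B y - b‖ ^ 2)
      + β0 * (β * (1 - 2 * β) * γ ^ 3 + (1 - 3 * β) * γ * γ' - γ'' / 2)
        * (‖x - xs‖ ^ 2 + ‖y - ys‖ ^ 2 + ‖l - ls‖ ^ 2)
      + (β0 + β - 1) * γ * (‖x'‖ ^ 2 + ‖y'‖ ^ 2 + ‖l'‖ ^ 2) ≤ 0 := by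
  have hgap := half_norm_sq_le_augLagrangian_sub hf hg hfs hgs hb x y
  have hfx' : f x - f xs ≤ ⟪gx, x - xs⟫ := by
    have := hf.add_inner_le_of_hasGradientAt hfx xs
    rw [← neg_sub, inner_neg_right] at this; linarith
  have hgy' : g y - g ys ≤ ⟪gy, y - ys⟫ := by
    have := hg.add_inner_le_of_hasGradientAt hgy ys
    rw [← neg_sub, inner_neg_right] at this; linarith
  have hgap' : augLagrangian f g A B b x y ls - augLagrangian f g A B b xs ys ls
      ≤ ⟪gx, x - xs⟫ + ⟪gy, y - ys⟫ + ⟪ls, A x + B y - b⟫ + ‖A x + B y - b‖ ^ 2 := by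
    simp only [augLagrangian, ← hb, sub_self, inner_zero_right, norm_zero] at hgap ⊢
    nlinarith [sq_nonneg ‖A x + B y - (A xs + B ys)‖]
  have hC : β * (1 - 2 * β) * γ ^ 3 + (1 - 3 * β) * γ * γ' - γ'' / 2 ≤ 0 := by
    have : 0 ≤ (1 - 3 * β) * γ := mul_nonneg (by linarith) hγ.le
    nlinarith [mul_nonpos_of_nonneg_of_nonpos this hγ']
  have hβ0γ : 0 ≤ β0 * γ := mul_nonneg (by linarith) hγ.le
  have hΔL : 0 ≤ augLagrangian f g A B b x y ls - augLagrangian f g A B b xs ys ls :=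
    le_trans (by positivity) hgap
  nlinarith [mul_le_mul_of_nonneg_left hgap' hβ0γ,
    mul_nonneg (mul_nonneg (sub_nonneg.2 hβ0) hγ.le) hΔL,
    mul_nonpos_of_nonpos_of_nonneg (mul_nonpos_of_nonneg_of_nonpos (by linarith : (0 : ℝ) ≤ β0) hC)
      (by positivity : (0 : ℝ) ≤ ‖x - xs‖ ^ 2 + ‖y - ys‖ ^ 2 + ‖l - ls‖ ^ 2),
    mul_nonpos_of_nonpos_of_nonneg (mul_nonpos_of_nonpos_of_nonneg (by linarith : β0 + β - 1 ≤ 0)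
      hγ.le) (by positivity : (0 : ℝ) ≤ ‖x'‖ ^ 2 + ‖y'‖ ^ 2 + ‖l'‖ ^ 2)]

end Saddle

theorem stmt_17_general (n1 n2 m : ℕ) (t0 T β β0 : ℝ)
    (hβ : β ∈ Set.Ioo (0:ℝ) (1/3)) (hβ0 : β0 ∈ Set.Ico (2*β) (1-β))
    (γ γ' γ'' δ p θ η : ℝ → ℝ)
    (hγpos : ∀ t ∈ Ici t0, 0 < γ t)
    (hγanti : AntitoneOn γ (Ici t0))
    (hγd1 : ∀ t ∈ Ici t0, HasDerivWithinAt γ (γ' t) (Ici t0) t)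
    (hγd2 : ∀ t ∈ Ici t0, HasDerivWithinAt γ' (γ'' t) (Ici t0) t)
    (hγineq : ∀ t ∈ Ici t0, 2 * β ^ 2 * γ t ^ 3 ≤ γ'' t)
    (hδ : ∀ t, δ t = 1 / (β0 * γ t))
    (hp : ∀ t, p t = Real.exp (∫ s in t0..t, γ s))
    (hθ : ∀ t, θ t = β0 * p t ^ β * γ t)
    (hη : ∀ t, η t = -β0 * p t ^ (2*β) * ((β0 + 2*β - 1) * γ t ^ 2 + γ' t))
    (f : EuclideanSpace ℝ (Fin n1) → ℝ) (g : EuclideanSpace ℝ (Fin n2) → ℝ)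
    (hfc : ConvexOn ℝ univ f) (hgc : ConvexOn ℝ univ g)
    (hfd : Differentiable ℝ f) (hgd : Differentiable ℝ g)
    (A : EuclideanSpace ℝ (Fin n1) →L[ℝ] EuclideanSpace ℝ (Fin m))
    (B : EuclideanSpace ℝ (Fin n2) →L[ℝ] EuclideanSpace ℝ (Fin m))
    (b : EuclideanSpace ℝ (Fin m))
    (xs : EuclideanSpace ℝ (Fin n1)) (ys : EuclideanSpace ℝ (Fin n2))
    (ls : EuclideanSpace ℝ (Fin m))
    (hkkt1 : -(ContinuousLinearMap.adjoint A ls) = gradient f xs)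
    (hkkt2 : -(ContinuousLinearMap.adjoint B ls) = gradient g ys)
    (hkkt3 : A xs + B ys = b)
    (L : EuclideanSpace ℝ (Fin n1) → EuclideanSpace ℝ (Fin n2) →
      EuclideanSpace ℝ (Fin m) → ℝ)
    (hL : ∀ x y l, L x y l =
      f x + g y + (inner ℝ l (A x + B y - b) : ℝ) + (1/2) * ‖A x + B y - b‖ ^ 2)
    (x x' x'' : ℝ → EuclideanSpace ℝ (Fin n1))
    (y y' y'' : ℝ → EuclideanSpace ℝ (Fin n2))
    (l l' l'' : ℝ → EuclideanSpace ℝ (Fin m))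
    (hx1 : ∀ t ∈ Ico t0 T, HasDerivWithinAt x (x' t) (Ico t0 T) t)
    (hx2 : ∀ t ∈ Ico t0 T, HasDerivWithinAt x' (x'' t) (Ico t0 T) t)
    (hy1 : ∀ t ∈ Ico t0 T, HasDerivWithinAt y (y' t) (Ico t0 T) t)
    (hy2 : ∀ t ∈ Ico t0 T, HasDerivWithinAt y' (y'' t) (Ico t0 T) t)
    (hl1 : ∀ t ∈ Ico t0 T, HasDerivWithinAt l (l' t) (Ico t0 T) t)
    (hl2 : ∀ t ∈ Ico t0 T, HasDerivWithinAt l' (l'' t) (Ico t0 T) t)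
    (hodex : ∀ t ∈ Ico t0 T, x'' t + γ t • x' t =
      -gradient f (x t) - ContinuousLinearMap.adjoint A (l t + δ t • l' t)
        - ContinuousLinearMap.adjoint A (A (x t) + B (y t) - b))
    (hodey : ∀ t ∈ Ico t0 T, y'' t + γ t • y' t =
      -gradient g (y t) - ContinuousLinearMap.adjoint B (l t + δ t • l' t)
        - ContinuousLinearMap.adjoint B (A (x t) + B (y t) - b))
    (hodel : ∀ t ∈ Ico t0 T, l'' t + γ t • l' t =
      A (x t + δ t • x' t) + B (y t + δ t • y' t) - b)
    (E : ℝ → ℝ)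
    (hE : ∀ t, E t = p t ^ (2*β) * (L (x t) (y t) ls - L xs ys ls)
      + (1/2) * ‖θ t • (x t - xs) + p t ^ β • x' t‖ ^ 2 + (η t / 2) * ‖x t - xs‖ ^ 2
      + (1/2) * ‖θ t • (y t - ys) + p t ^ β • y' t‖ ^ 2 + (η t / 2) * ‖y t - ys‖ ^ 2
      + (1/2) * ‖θ t • (l t - ls) + p t ^ β • l' t‖ ^ 2 + (η t / 2) * ‖l t - ls‖ ^ 2) :
    AntitoneOn E (Ico t0 T) := by
  obtain ⟨hβ, hβ3⟩ := hβ
  obtain ⟨hβ0, hβ01⟩ := hβ0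
  have hκ : ∀ t ∈ Ico t0 T, β0 * γ t ≠ 0 := fun t ht =>
    (mul_pos (by linarith) (hγpos t (Ico_subset_Ici_self ht))).ne'
  obtain rfl : p = fun t => Real.exp (∫ s in t0..t, γ s) := funext hp
  set r := fun t => Real.exp (∫ s in t0..t, γ s) ^ β
  have hr : ∀ t ∈ Ici t0, HasDerivWithinAt r (β * γ t * r t) (Ici t0) t := fun t ht =>
    hasDerivWithinAt_exp_integral_rpow β (fun t ht => (hγd1 t ht).continuousWithinAt) ht
  have hrpos : ∀ t, 0 < r t := fun t => Real.rpow_pos_of_pos (Real.exp_pos _) β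
  obtain rfl : E = fun t => saddleEnergy f g A B b xs ys ls β β0 (r t) (γ t) (γ' t)
      (x t) (x' t) (y t) (y' t) (l t) (l' t) := funext fun t => by
    rw [hE, hθ, hη, mul_comm 2 β, Real.rpow_mul (Real.exp_pos _).le, Real.rpow_two]
    simp only [saddleEnergy, dampedEnergy, hL, augLagrangian, r]
    ring
  have hS : Ico t0 T ⊆ Ici t0 := Ico_subset_Ici_self
  refine (convex_Ico t0 T).antitoneOn_of_hasDerivWithinAt_nonpos (fun t ht =>
    hasDerivWithinAt_saddleEnergy hkkt3 (by rw [hδ, mul_one_div_cancel (hκ t ht)])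
      (hfd _).hasGradientAt (hgd _).hasGradientAt (hx1 t ht) (hx2 t ht) (hy1 t ht) (hy2 t ht)
      (hl1 t ht) (hl2 t ht) ((hr t (hS ht)).mono hS) ((hγd1 t (hS ht)).mono hS)
      ((hγd2 t (hS ht)).mono hS) (hodex t ht) (hodey t ht) (hodel t ht)) fun t ht => ?_
  have ht' : t ∈ Ici t0 := by rw [interior_Ico] at ht; exact mem_Ici.2 ht.1.le
  exact mul_nonpos_of_nonneg_of_nonpos (sq_nonneg _) (saddle_dissipation_nonpos hfc hgc
    (hkkt1 ▸ (hfd xs).hasGradientAt) (hkkt2 ▸ (hgd ys).hasGradientAt) hkkt3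
    (hfd _).hasGradientAt (hgd _).hasGradientAt hβ.le hβ3.le hβ0 hβ01.le (hγpos t ht')
    (deriv_add_mul_sq_nonpos hβ hγpos hγanti hγd1 hγd2 hγineq hr (fun t _ => hrpos t) ht')
    (hγineq t ht'))

theorem stmt_17 (n1 n2 m : ℕ) (t0 T β β0 : ℝ)
    (hβ : β ∈ Set.Ioo (0:ℝ) (1/3)) (hβ0 : β0 ∈ Set.Ico (2*β) (1-β))
    (γ γ' γ'' δ p θ η : ℝ → ℝ)
    (hγpos : ∀ t ∈ Ici t0, 0 < γ t)
    (hγanti : AntitoneOn γ (Ici t0))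
    (hγd1 : ∀ t ∈ Ici t0, HasDerivWithinAt γ (γ' t) (Ici t0) t)
    (hγd2 : ∀ t ∈ Ici t0, HasDerivWithinAt γ' (γ'' t) (Ici t0) t)
    (hγc : ContinuousOn γ'' (Ici t0))
    (hγineq : ∀ t ∈ Ici t0, 2 * β ^ 2 * γ t ^ 3 ≤ γ'' t)
    (hδ : ∀ t, δ t = 1 / (β0 * γ t))
    (hp : ∀ t, p t = Real.exp (∫ s in t0..t, γ s))
    (hθ : ∀ t, θ t = β0 * p t ^ β * γ t)
    (hη : ∀ t, η t = -β0 * p t ^ (2*β) * ((β0 + 2*β - 1) * γ t ^ 2 + γ' t))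
    (f : EuclideanSpace ℝ (Fin n1) → ℝ) (g : EuclideanSpace ℝ (Fin n2) → ℝ)
    (hfc : ConvexOn ℝ univ f) (hgc : ConvexOn ℝ univ g)
    (hfd : Differentiable ℝ f) (hgd : Differentiable ℝ g)
    (A : EuclideanSpace ℝ (Fin n1) →L[ℝ] EuclideanSpace ℝ (Fin m))
    (B : EuclideanSpace ℝ (Fin n2) →L[ℝ] EuclideanSpace ℝ (Fin m))
    (b : EuclideanSpace ℝ (Fin m))
    (xs : EuclideanSpace ℝ (Fin n1)) (ys : EuclideanSpace ℝ (Fin n2))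
    (ls : EuclideanSpace ℝ (Fin m))
    (hkkt1 : -(ContinuousLinearMap.adjoint A ls) = gradient f xs)
    (hkkt2 : -(ContinuousLinearMap.adjoint B ls) = gradient g ys)
    (hkkt3 : A xs + B ys = b)
    (L : EuclideanSpace ℝ (Fin n1) → EuclideanSpace ℝ (Fin n2) →
      EuclideanSpace ℝ (Fin m) → ℝ)
    (hL : ∀ x y l, L x y l =
      f x + g y + (inner ℝ l (A x + B y - b) : ℝ) + (1/2) * ‖A x + B y - b‖ ^ 2)
    (x x' x'' : ℝ → EuclideanSpace ℝ (Fin n1))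
    (y y' y'' : ℝ → EuclideanSpace ℝ (Fin n2))
    (l l' l'' : ℝ → EuclideanSpace ℝ (Fin m))
    (hx1 : ∀ t ∈ Ico t0 T, HasDerivWithinAt x (x' t) (Ico t0 T) t)
    (hx2 : ∀ t ∈ Ico t0 T, HasDerivWithinAt x' (x'' t) (Ico t0 T) t)
    (hy1 : ∀ t ∈ Ico t0 T, HasDerivWithinAt y (y' t) (Ico t0 T) t)
    (hy2 : ∀ t ∈ Ico t0 T, HasDerivWithinAt y' (y'' t) (Ico t0 T) t)
    (hl1 : ∀ t ∈ Ico t0 T, HasDerivWithinAt l (l' t) (Ico t0 T) t)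
    (hl2 : ∀ t ∈ Ico t0 T, HasDerivWithinAt l' (l'' t) (Ico t0 T) t)
    (hxc : ContinuousOn x'' (Ico t0 T)) (hyc : ContinuousOn y'' (Ico t0 T))
    (hlc : ContinuousOn l'' (Ico t0 T))
    (hodex : ∀ t ∈ Ico t0 T, x'' t + γ t • x' t =
      -gradient f (x t) - ContinuousLinearMap.adjoint A (l t + δ t • l' t)
        - ContinuousLinearMap.adjoint A (A (x t) + B (y t) - b))
    (hodey : ∀ t ∈ Ico t0 T, y'' t + γ t • y' t =
      -gradient g (y t) - ContinuousLinearMap.adjoint B (l t + δ t • l' t)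
        - ContinuousLinearMap.adjoint B (A (x t) + B (y t) - b))
    (hodel : ∀ t ∈ Ico t0 T, l'' t + γ t • l' t =
      A (x t + δ t • x' t) + B (y t + δ t • y' t) - b)
    (E : ℝ → ℝ)
    (hE : ∀ t, E t = p t ^ (2*β) * (L (x t) (y t) ls - L xs ys ls)
      + (1/2) * ‖θ t • (x t - xs) + p t ^ β • x' t‖ ^ 2 + (η t / 2) * ‖x t - xs‖ ^ 2
      + (1/2) * ‖θ t • (y t - ys) + p t ^ β • y' t‖ ^ 2 + (η t / 2) * ‖y t - ys‖ ^ 2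
      + (1/2) * ‖θ t • (l t - ls) + p t ^ β • l' t‖ ^ 2 + (η t / 2) * ‖l t - ls‖ ^ 2) :
    AntitoneOn E (Ico t0 T) :=
  stmt_17_general n1 n2 m t0 T β β0 hβ hβ0 γ γ' γ'' δ p θ η hγpos hγanti hγd1 hγd2 hγineq hδ hp hθ
    hη f g hfc hgc hfd hgd A B b xs ys ls hkkt1 hkkt2 hkkt3 L hL x x' x'' y y' y'' l l' l'' hx1 hx2
    hy1 hy2 hl1 hl2 hodex hodey hodel E hE
end
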